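/- Let K be a field of characteristic zero. If P₀ ∈ A₁(K) satisfies β(P₀) = P₀ (where β(x)=x, β(y)=-y) and deg_x(P₀) = 0, i.e., P₀ ∈ K[y²], then for every P₁ ∈ A₁(K) the commutator [P₀, P₁] is not a nonzero scalar. -/

import Mathlib

open scoped BigOperators

variable (K : Type*) [Field K]

/-- Defining relation of the first Weyl algebra: `y*x = x*y + 1`. -/
inductive WeylRel : FreeAlgebra K (Fin 2) → FreeAlgebra K (Fin 2) → Prop
  | rel : WeylRel (FreeAlgebra.ι K 1 * FreeAlgebra.ι K 0) (FreeAlgebra.ι K 0 * FreeAlgebra.ι K 1 + 1)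

/-- The first Weyl algebra `A₁(K) = K⟨x,y⟩/(yx - xy - 1)`. -/
abbrev Weyl := RingQuot (WeylRel K)

/-- The generator `x` of `A₁(K)`. -/
abbrev wx : Weyl K := RingQuot.mkAlgHom K (WeylRel K) (FreeAlgebra.ι K 0)

/-- The generator `y` of `A₁(K)`. -/
abbrev wy : Weyl K := RingQuot.mkAlgHom K (WeylRel K) (FreeAlgebra.ι K 1)

/-- `IsBetaInv β` says that `β` is the K-linear unital antiautomorphism-data of `A₁(K)`
determined by `β(x) = x`, `β(y) = -y`. -/
def IsBetaInv (β : Weyl K → Weyl K) : Prop :=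
  (∀ u v, β (u + v) = β u + β v) ∧ (∀ (c : K) (u), β (c • u) = c • β u) ∧
  (∀ u v, β (u * v) = β v * β u) ∧ β 1 = 1 ∧ β (wx K) = wx K ∧ β (wy K) = -(wy K)

/-!
Let `A₁(K)` act on `K[t]` with `y` as multiplication by `t` and `x` as `-d/dt`. Then `P₀ = p(y²)`
acts as multiplication by the even polynomial `g = p(t²)`, and the image `A` of `P₁` is killed by a
power of `ad t`, since this holds for the generators and such elements form a subalgebra.

If `deg g ≥ 2` and `[g, A]` is a scalar, then `[g, ad t A] = ad t [g, A] = 0`, so by induction on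
the nilpotency index `ad t A` commutes with `t`, i.e. is multiplication by some `b`. Then
`A = e - b·d/dt` and `[g, A] = b·g'`, which is constant only if `b = 0`. Hence `A` commutes with
`t`, so it is a multiplication operator and `[g, A] = 0`. For constant `g` this is clear, and
`deg g = 1` cannot occur since `g` is even.
-/

open Polynomial
open Algebra (lmul)

section AdLocallyNilpotent

variable (R : Type*) {A : Type*} [CommRing R] [Ring A] [Algebra R A]

def ad (a : A) : Module.End R A := LinearMap.mulLeft R a - LinearMap.mulRight R a

variable {R}

@[simp]
theorem ad_apply (a x : A) : ad R a x = a * x - x * a := rfl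

theorem ad_mul (a x y : A) : ad R a (x * y) = ad R a x * y + x * ad R a y := by
  simp only [ad_apply]; noncomm_ring

@[simp]
theorem ad_algebraMap (a : A) (r : R) : ad R a (algebraMap R A r) = 0 := by
  simp [Algebra.commutes]

theorem ad_ad_comm {a b : A} (h : Commute a b) (x : A) :
    ad R a (ad R b x) = ad R b (ad R a x) := by
  have hdiff : ad R a (ad R b x) - ad R b (ad R a x) =
      (a * b - b * a) * x - x * (a * b - b * a) := by
    simp only [ad_apply]; noncomm_ring
  rw [← sub_eq_zero, hdiff, h.eq, sub_self, zero_mul, mul_zero, sub_self]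

theorem ad_pow_add_mul_eq_zero (a : A) {m n : ℕ} {x y : A}
    (hx : (ad R a ^ m) x = 0) (hy : (ad R a ^ n) y = 0) :
    (ad R a ^ (m + n)) (x * y) = 0 := by
  induction h : m + n generalizing m n x y with
  | zero =>
    obtain ⟨rfl, rfl⟩ : m = 0 ∧ n = 0 := by omega
    simp_all
  | succ k ih =>
    rcases m with _ | m
    · simp_all
    rcases n with _ | n
    · simp_all
    rw [pow_succ, Module.End.mul_apply, ad_mul, map_add,
      ih (m := m) (n := n + 1) (by rwa [← Module.End.mul_apply, ← pow_succ]) hy (by omega),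
      ih (m := m + 1) (n := n) hx (by rwa [← Module.End.mul_apply, ← pow_succ]) (by omega),
      add_zero]

variable (R) in
def adLocallyNilpotent (a : A) : Subalgebra R A where
  carrier := {x | ∃ n, (ad R a ^ n) x = 0}
  mul_mem' := fun ⟨m, hx⟩ ⟨n, hy⟩ => ⟨m + n, ad_pow_add_mul_eq_zero a hx hy⟩
  add_mem' := fun {x y} ⟨m, hx⟩ ⟨n, hy⟩ => ⟨m + n, by
    rw [map_add, Module.End.pow_map_zero_of_le (by omega) hx,
      Module.End.pow_map_zero_of_le (by omega) hy, add_zero]⟩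
  algebraMap_mem' r := ⟨1, ad_algebraMap a r⟩

end AdLocallyNilpotent

section PolynomialOperators

variable {K}

theorem lmul_mul_derivative_sub_derivative_mul (g : K[X]) :
    lmul K K[X] g * derivative - derivative * lmul K K[X] g = -lmul K K[X] (derivative g) :=
  LinearMap.ext fun f => by simp [derivative_mul]

theorem eq_lmul_of_ad_X_eq_zero {B : Module.End K K[X]} (h : ad K (lmul K K[X] X) B = 0) :
    B = lmul K K[X] (B 1) := by
  rw [ad_apply, sub_eq_zero] at h
  have hX : ∀ f, B (X * f) = X * B f := fun f => (LinearMap.congr_fun h f).symm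
  refine LinearMap.ext fun f => ?_
  induction f using Polynomial.induction_on with
  | C a => rw [← mul_one (C a), ← smul_eq_C_mul, map_smul]; simp
  | add f g hf hg => simp_all [mul_add]
  | monomial n a ih =>
    rw [pow_succ', mul_left_comm, hX, ih]
    simp only [Algebra.coe_lmul_eq_mul, LinearMap.mul_apply']
    ring

theorem commute_lmul (f g : K[X]) : Commute (lmul K K[X] f) (lmul K K[X] g) :=
  (Commute.all f g).map _

theorem exists_eq_lmul_sub_lmul_mul_derivative {A : Module.End K K[X]} {b : K[X]}
    (h : ad K (lmul K K[X] X) A = lmul K K[X] b) :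
    ∃ e, A = lmul K K[X] e - lmul K K[X] b * derivative := by
  refine ⟨(A + lmul K K[X] b * derivative : Module.End K K[X]) 1, eq_sub_iff_add_eq.mpr ?_⟩
  refine eq_lmul_of_ad_X_eq_zero ?_
  have hXb : ad K (lmul K K[X] X) (lmul K K[X] b * derivative) =
      lmul K K[X] b * (lmul K K[X] X * derivative - derivative * lmul K K[X] X) := by
    rw [ad_apply, ← mul_assoc, (commute_lmul X b).eq, mul_assoc]
    simp only [mul_sub, mul_assoc]
  rw [map_add, h, hXb, lmul_mul_derivative_sub_derivative_mul, derivative_X, map_one]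
  exact LinearMap.ext fun f => by simp

theorem ad_lmul_lmul_sub_lmul_mul_derivative (g e b : K[X]) :
    ad K (lmul K K[X] g) (lmul K K[X] e - lmul K K[X] b * derivative) =
      lmul K K[X] (b * derivative g) := by
  calc ad K (lmul K K[X] g) (lmul K K[X] e - lmul K K[X] b * derivative)
      = lmul K K[X] b * (derivative * lmul K K[X] g - lmul K K[X] g * derivative) := by
        rw [ad_apply, mul_sub, sub_mul, ← mul_assoc, (commute_lmul g e).eq, (commute_lmul g b).eq]
        simp only [mul_sub, mul_assoc]
        abel
    _ = _ := by rw [← neg_sub, lmul_mul_derivative_sub_derivative_mul, neg_neg, map_mul]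

theorem eq_zero_of_mul_derivative_eq_C [CharZero K] {g b : K[X]} {c : K} (hg : 2 ≤ g.natDegree)
    (h : b * derivative g = C c) : b = 0 := by
  by_contra hb
  have hg' : derivative g ≠ 0 := fun h0 => by
    have := natDegree_derivative g
    rw [h0, natDegree_zero] at this
    omega
  have := congrArg natDegree h
  rw [natDegree_mul hb hg', natDegree_C, natDegree_derivative] at this
  omega

theorem ad_X_eq_zero_of_ad_lmul_eq_algebraMap [CharZero K] {g : K[X]} (hg : 2 ≤ g.natDegree)
    {n : ℕ} :
    ∀ {A : Module.End K K[X]} {c : K}, (ad K (lmul K K[X] X) ^ n) A = 0 →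
      ad K (lmul K K[X] g) A = algebraMap K _ c → ad K (lmul K K[X] X) A = 0 := by
  induction n with
  | zero =>
    intro A c hA _
    rw [pow_zero, Module.End.one_apply] at hA
    rw [hA, map_zero]
  | succ n ih =>
    intro A c hA hc
    set B := ad K (lmul K K[X] X) A
    have hgB : ad K (lmul K K[X] g) B = algebraMap K _ 0 := by
      rw [ad_ad_comm (commute_lmul g X), hc, ad_algebraMap, map_zero]
    have hB := eq_lmul_of_ad_X_eq_zero (ih (by rwa [← Module.End.mul_apply, ← pow_succ]) hgB)
    obtain ⟨e, he⟩ := exists_eq_lmul_sub_lmul_mul_derivative hB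
    rw [he, ad_lmul_lmul_sub_lmul_mul_derivative, ← (lmul K K[X]).commutes,
      algebraMap_eq] at hc
    rw [hB, eq_zero_of_mul_derivative_eq_C hg (Algebra.lmul_injective hc), map_zero]

theorem lmul_mul_sub_mul_lmul_ne_algebraMap [CharZero K] {g : K[X]} (hg : g.natDegree ≠ 1)
    {A : Module.End K K[X]} (hA : A ∈ adLocallyNilpotent K (lmul K K[X] X)) {c : K} (hc : c ≠ 0) :
    lmul K K[X] g * A - A * lmul K K[X] g ≠ algebraMap K _ c := by
  intro h
  have hcomm : lmul K K[X] g * A - A * lmul K K[X] g = 0 := by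
    obtain hg0 | hg2 : g.natDegree = 0 ∨ 2 ≤ g.natDegree := by omega
    · rw [eq_C_of_natDegree_eq_zero hg0, ← algebraMap_eq, (lmul K K[X]).commutes,
        Algebra.commutes, sub_self]
    · obtain ⟨n, hn⟩ := hA
      rw [eq_lmul_of_ad_X_eq_zero (ad_X_eq_zero_of_ad_lmul_eq_algebraMap hg2 hn h),
        (commute_lmul g _).eq, sub_self]
  rw [hcomm, eq_comm, map_eq_zero_iff _ (algebraMap K _).injective] at h
  exact hc h

end PolynomialOperators

noncomputable def fourierRep : Weyl K →ₐ[K] Module.End K K[X] :=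
  RingQuot.liftAlgHom K ⟨FreeAlgebra.lift K ![-derivative, lmul K K[X] X], by
    rintro _ _ ⟨⟩
    simp only [map_mul, map_add, map_one, FreeAlgebra.lift_ι_apply]
    exact LinearMap.ext fun f => by simp [derivative_mul]⟩

theorem fourierRep_wx : fourierRep K (wx K) = -derivative := by
  simp [fourierRep]

theorem fourierRep_wy : fourierRep K (wy K) = lmul K K[X] X := by
  simp [fourierRep]

theorem fourierRep_mem_adLocallyNilpotent (u : Weyl K) :
    fourierRep K u ∈ adLocallyNilpotent K (lmul K K[X] X) := by
  obtain ⟨F, rfl⟩ := RingQuot.mkAlgHom_surjective K (WeylRel K) u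
  induction F using FreeAlgebra.induction with
  | grade0 r =>
    rw [AlgHom.commutes, AlgHom.commutes]
    exact Subalgebra.algebraMap_mem _ r
  | grade1 i =>
    fin_cases i
    · have hx : ad K (lmul K K[X] X) (-derivative) = 1 := LinearMap.ext fun f => by simp
      refine ⟨2, ?_⟩
      change (ad K (lmul K K[X] X) ^ 2) (fourierRep K (wx K)) = 0
      rw [fourierRep_wx, pow_two, Module.End.mul_apply, hx]
      simp
    · exact ⟨1, by simp [fourierRep_wy]⟩
  | mul a b ha hb => rw [map_mul, map_mul]; exact mul_mem ha hb
  | add a b ha hb => rw [map_add, map_add]; exact add_mem ha hb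

theorem stmt_12 [CharZero K] (P₀ : Weyl K)
    (hdeg : ∃ p : Polynomial K, P₀ = Polynomial.aeval (wy K * wy K) p) :
    ∀ (P₁ : Weyl K) (c : K), c ≠ 0 → P₀ * P₁ - P₁ * P₀ ≠ algebraMap K (Weyl K) c := by
  rintro P₁ c hc h
  obtain ⟨p, rfl⟩ := hdeg
  have hP₀ : fourierRep K (aeval (wy K * wy K) p) = lmul K K[X] (p.comp (X * X)) := by
    rw [← aeval_algHom_apply, map_mul, fourierRep_wy, ← map_mul, aeval_algHom_apply, comp_eq_aeval]
  have hg : (p.comp (X * X)).natDegree ≠ 1 := by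
    rw [natDegree_comp, natDegree_mul X_ne_zero X_ne_zero, natDegree_X]
    omega
  refine lmul_mul_sub_mul_lmul_ne_algebraMap hg (fourierRep_mem_adLocallyNilpotent K P₁) hc ?_
  have := congrArg (fourierRep K) h
  rwa [map_sub, map_mul, map_mul, hP₀, AlgHom.commutes] at this
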